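/- arXiv:1108.5367 — 3 statements merged into one kernel-verified Lean document; each statement's English description precedes it below -/
import Mathlib

section
/- Let E be a finite-dimensional complex vector space equipped with two ascending exhaustive filtrations 'F and ''F. Define the bifiltration F_{i,j}E = 'F_i E ∩ ''F_j E and the Rees module R(E) = ⊕_{i,j≥0} τ₁^i τ₂^j · F_{i,j}E ⊂ ℂ[τ₁,τ₂] ⊗ E. Then R(E) is a free ℂ[τ₁,τ₂]-module of rank dim E. -/
/-!
Choose for every `(i, j)` a complement `C i j` of `F_{i-1,j} + F_{i,j-1}` in `F_{i,j}`. Because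
`F_{i-1,j} ∩ F_{i,j-1} = F_{i-1,j-1}`, inclusion–exclusion makes `dim C i j` the mixed second
difference of `dim F_{i,j}`, so `∑_{i ≤ p, j ≤ q} dim C i j = dim F_{p,q}`; as these `C i j` also
span `F_{p,q}`, concatenating bases of the `C i j` gives a basis `e` of `E` adapted to both
filtrations (Bruhat's lemma), with `e k ∈ C (a k) (b k)`. The vectors `τ₁^{a k} τ₂^{b k} ⊗ e k` span
the Rees module, and they are linearly independent over `ℂ[τ₁, τ₂]`, being nonzero multiples of the
basis `1 ⊗ e k` of `ℂ[τ₁, τ₂] ⊗ E`.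
-/

open scoped TensorProduct

/-- The Rees module of the bifiltration `F_{i,j} E = 'F_i E ⊓ ''F_j E` attached to a pair of
ascending filtrations on `E`, realized as the `ℂ[τ₁,τ₂]`-submodule of `ℂ[τ₁,τ₂] ⊗ E`
spanned by the elements `τ₁^i τ₂^j ⊗ v` with `v ∈ 'F_i E ⊓ ''F_j E`. -/
noncomputable def reesModule {E : Type*} [AddCommGroup E] [Module ℂ E]
    (F G : ℕ → Submodule ℂ E) :
    Submodule (MvPolynomial (Fin 2) ℂ) (MvPolynomial (Fin 2) ℂ ⊗[ℂ] E) :=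
  Submodule.span (MvPolynomial (Fin 2) ℂ)
    {x | ∃ (i j : ℕ) (v : E), v ∈ F i ⊓ G j ∧
      x = (MvPolynomial.monomial (Finsupp.single 0 i + Finsupp.single 1 j) (1 : ℂ)) ⊗ₜ[ℂ] v}

open Module Submodule Finset

theorem Monotone.eventually_eq_top {R M : Type*} [Semiring R] [AddCommMonoid M] [Module R M]
    [IsNoetherian R M] {F : ℕ → Submodule R M} (hF : Monotone F) (hexh : ⨆ i, F i = ⊤) :
    ∀ᶠ n in Filter.atTop, F n = ⊤ := by
  obtain ⟨N, hN⟩ : ∃ N, ∀ n, N ≤ n → F N = F n :=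
    monotone_stabilizes_iff_noetherian.mpr inferInstance ⟨F, hF⟩
  refine Filter.eventually_atTop.2 ⟨N, fun n hn => top_le_iff.1 ?_⟩
  rw [← hexh, ← hN n hn]
  exact iSup_le fun i => (hF (le_max_left i N)).trans (hN _ (le_max_right i N)).ge

theorem sum_range_sum_range_eq_of_mixed_difference {c d : ℕ → ℕ → ℕ} (hd₀ : ∀ j, d 0 j = 0)
    (hd₀' : ∀ i, d i 0 = 0)
    (h : ∀ i j, c i j + d i (j + 1) + d (i + 1) j = d (i + 1) (j + 1) + d i j) (p q : ℕ) :
    ∑ i ∈ range p, ∑ j ∈ range q, c i j = d p q := by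
  induction p with
  | zero => simp [hd₀]
  | succ p ih =>
    have row : ∀ q, ∑ j ∈ range q, c p j + d p q = d (p + 1) q := by
      intro q
      induction q with
      | zero => simp [hd₀']
      | succ q ihq => rw [sum_range_succ]; linarith [h p q]
    rw [sum_range_succ, ih]
    linarith [row q]

def prependBot {α : Type*} [Bot α] (f : ℕ → α) : ℕ → α
  | 0 => ⊥
  | n + 1 => f n

theorem Monotone.prependBot {α : Type*} [Preorder α] [OrderBot α] {f : ℕ → α} (hf : Monotone f) :
    Monotone (prependBot f) :=
  monotone_nat_of_le_succ fun
    | 0 => bot_le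
    | n + 1 => hf n.le_succ

section Bifiltration

variable {α : Type*} [Lattice α] [OrderBot α] {F G : ℕ → α}

/-- Indexed so that `bifiltration F G (i + 1) (j + 1) = F i ⊓ G j`, with `⊥` along both axes. -/
def bifiltration (F G : ℕ → α) (i j : ℕ) : α :=
  prependBot F i ⊓ prependBot G j

@[simp] theorem bifiltration_succ_succ (i j : ℕ) : bifiltration F G (i + 1) (j + 1) = F i ⊓ G j :=
  rfl

@[simp] theorem bifiltration_zero_left (j : ℕ) : bifiltration F G 0 j = ⊥ :=
  bot_inf_eq _

@[simp] theorem bifiltration_zero_right (i : ℕ) : bifiltration F G i 0 = ⊥ :=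
  inf_bot_eq _

theorem bifiltration_mono (hF : Monotone F) (hG : Monotone G) {i i' j j' : ℕ} (hi : i ≤ i')
    (hj : j ≤ j') : bifiltration F G i j ≤ bifiltration F G i' j' :=
  inf_le_inf (hF.prependBot hi) (hG.prependBot hj)

theorem bifiltration_inf_bifiltration (hF : Monotone F) (hG : Monotone G) (i j : ℕ) :
    bifiltration F G i (j + 1) ⊓ bifiltration F G (i + 1) j = bifiltration F G i j :=
  le_antisymm (le_inf (inf_le_left.trans inf_le_left) (inf_le_right.trans inf_le_right))
    (le_inf (bifiltration_mono hF hG le_rfl j.le_succ) (bifiltration_mono hF hG i.le_succ le_rfl))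

def IsBigradedComplement (F G : ℕ → α) (C : ℕ → ℕ → α) : Prop :=
  ∀ i j, Disjoint (bifiltration F G i (j + 1) ⊔ bifiltration F G (i + 1) j) (C i j) ∧
    bifiltration F G i (j + 1) ⊔ bifiltration F G (i + 1) j ⊔ C i j =
      bifiltration F G (i + 1) (j + 1)

end Bifiltration

namespace IsBigradedComplement

section OrderBot

variable {α : Type*} [Lattice α] [OrderBot α] {F G : ℕ → α} {C : ℕ → ℕ → α}

theorem le_bifiltration (hC : IsBigradedComplement F G C) (i j : ℕ) : C i j ≤ F i ⊓ G j :=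
  le_sup_right.trans (hC i j).2.le

theorem bifiltration_le (hC : IsBigradedComplement F G C) {S : α} {p q : ℕ}
    (hS : ∀ i < p, ∀ j < q, C i j ≤ S) : bifiltration F G p q ≤ S := by
  induction p generalizing q with
  | zero => simp
  | succ p ihp =>
    induction q with
    | zero => simp
    | succ q ihq =>
      rw [← (hC p q).2]
      refine sup_le (sup_le ?_ ?_) (hS p p.lt_succ_self q q.lt_succ_self)
      · exact ihp fun i hi j hj => hS i (hi.trans p.lt_succ_self) j hj
      · exact ihq fun i hi j hj => hS i hi j (hj.trans q.lt_succ_self)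

end OrderBot

variable {α : Type*} [Lattice α] [BoundedOrder α] {F G : ℕ → α} {C : ℕ → ℕ → α}

theorem _root_.exists_isBigradedComplement [IsModularLattice α] [ComplementedLattice α]
    (hF : Monotone F) (hG : Monotone G) : ∃ C, IsBigradedComplement F G C := by
  choose C hC using fun i j => IsModularLattice.exists_disjoint_and_sup_eq
    (sup_le (bifiltration_mono hF hG i.le_succ le_rfl) (bifiltration_mono hF hG le_rfl j.le_succ) :
      bifiltration F G i (j + 1) ⊔ bifiltration F G (i + 1) j ≤ bifiltration F G (i + 1) (j + 1))
  exact ⟨C, hC⟩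

theorem eq_bot_of_lt (hC : IsBigradedComplement F G C) {N i j : ℕ}
    (hN : ∀ n ≥ N, F n = ⊤ ∧ G n = ⊤) (h : N < i ∨ N < j) : C i j = ⊥ := by
  refine (hC i j).1.symm.eq_bot_of_le ((hC.le_bifiltration i j).trans ?_)
  rcases h with h | h
  · obtain ⟨i, rfl⟩ := Nat.exists_eq_add_one_of_ne_zero (by omega : i ≠ 0)
    exact le_sup_of_le_left (inf_le_inf_right _ (le_top.trans_eq (hN i (by omega)).1.symm))
  · obtain ⟨j, rfl⟩ := Nat.exists_eq_add_one_of_ne_zero (by omega : j ≠ 0)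
    exact le_sup_of_le_right (inf_le_inf_left _ (le_top.trans_eq (hN j (by omega)).2.symm))

end IsBigradedComplement

section FiniteDimensional

variable {K E : Type*} [DivisionRing K] [AddCommGroup E] [Module K E] [FiniteDimensional K E]
  {F G : ℕ → Submodule K E} {C : ℕ → ℕ → Submodule K E}

theorem IsBigradedComplement.finrank_add_finrank (hF : Monotone F) (hG : Monotone G)
    (hC : IsBigradedComplement F G C) (i j : ℕ) :
    finrank K (C i j) + finrank K ↥(bifiltration F G i (j + 1)) +
        finrank K ↥(bifiltration F G (i + 1) j) =
      finrank K ↥(bifiltration F G (i + 1) (j + 1)) + finrank K ↥(bifiltration F G i j) := by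
  have h₁ := finrank_sup_add_finrank_inf_eq
    (bifiltration F G i (j + 1) ⊔ bifiltration F G (i + 1) j) (C i j)
  have h₂ :=
    finrank_sup_add_finrank_inf_eq (bifiltration F G i (j + 1)) (bifiltration F G (i + 1) j)
  rw [(hC i j).2, (hC i j).1.eq_bot, finrank_bot] at h₁
  rw [bifiltration_inf_bifiltration hF hG] at h₂
  omega

theorem IsBigradedComplement.sum_finrank (hF : Monotone F) (hG : Monotone G)
    (hC : IsBigradedComplement F G C) (p q : ℕ) :
    ∑ i ∈ range p, ∑ j ∈ range q, finrank K (C i j) = finrank K ↥(bifiltration F G p q) :=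
  sum_range_sum_range_eq_of_mixed_difference (d := fun i j => finrank K ↥(bifiltration F G i j))
    (by simp) (by simp) (hC.finrank_add_finrank hF hG) p q

end FiniteDimensional

def Module.Basis.IsAdapted {ι K E : Type*} [Semiring K] [AddCommMonoid E] [Module K E]
    (e : Basis ι K E) (a b : ι → ℕ) (F G : ℕ → Submodule K E) : Prop :=
  ∀ p q, F p ⊓ G q = span K (e '' {k | a k ≤ p ∧ b k ≤ q})

theorem exists_basis_isAdapted {K E : Type*} [DivisionRing K] [AddCommGroup E] [Module K E]
    [FiniteDimensional K E] {F G : ℕ → Submodule K E} (hF : Monotone F) (hG : Monotone G)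
    (hFexh : ⨆ i, F i = ⊤) (hGexh : ⨆ j, G j = ⊤) :
    ∃ (ι : Type) (e : Basis ι K E) (a b : ι → ℕ), e.IsAdapted a b F G := by
  obtain ⟨N, hN⟩ :=
    ((hF.eventually_eq_top hFexh).and (hG.eventually_eq_top hGexh)).exists_forall_of_atTop
  obtain ⟨C, hC⟩ := exists_isBigradedComplement hF hG
  let ι := Σ ij : Fin (N + 1) × Fin (N + 1), Fin (finrank K (C ij.1 ij.2))
  let v : ι → E := fun k => finBasis K (C k.1.1 k.1.2) k.2
  let a : ι → ℕ := fun k => k.1.1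
  let b : ι → ℕ := fun k => k.1.2
  have hC_le_span : ∀ i j, C i j ≤ span K (v '' {k | a k ≤ i ∧ b k ≤ j}) := by
    intro i j
    by_cases hij : i < N + 1 ∧ j < N + 1
    · rw [← (C i j).range_subtype, ← Submodule.map_top, ← (finBasis K (C i j)).span_eq, map_span,
        ← Set.range_comp]
      refine span_mono ?_
      rintro _ ⟨l, rfl⟩
      exact ⟨⟨(⟨i, hij.1⟩, ⟨j, hij.2⟩), l⟩, ⟨le_rfl, le_rfl⟩, rfl⟩
    · rw [hC.eq_bot_of_lt (i := i) (j := j) hN (by omega)]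
      exact bot_le
  have htop : bifiltration F G (N + 1) (N + 1) = ⊤ := by simp [hN N le_rfl]
  have hspan : ⊤ ≤ span K (Set.range v) := by
    rw [← htop]
    exact hC.bifiltration_le (p := N + 1) (q := N + 1) fun i _ j _ =>
      (hC_le_span i j).trans (span_mono (Set.image_subset_range _ _))
  have hcard : Fintype.card ι = finrank K E := by
    rw [Fintype.card_sigma, Fintype.sum_prod_type, ← finrank_top K E, ← htop,
      ← hC.sum_finrank hF hG]
    simp only [Fintype.card_fin, Finset.sum_range]
  refine ⟨ι, basisOfTopLeSpanOfCardEqFinrank v hspan hcard, a, b, fun p q => le_antisymm ?_ ?_⟩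
  all_goals rw [coe_basisOfTopLeSpanOfCardEqFinrank]
  · exact hC.bifiltration_le (p := p + 1) (q := q + 1) fun i hi j hj =>
      (hC_le_span i j).trans (span_mono (Set.image_mono fun k hk =>
        ⟨hk.1.trans (Nat.le_of_lt_succ hi), hk.2.trans (Nat.le_of_lt_succ hj)⟩))
  · refine span_le.2 ?_
    rintro _ ⟨k, hk, rfl⟩
    exact inf_le_inf (hF hk.1) (hG hk.2) (hC.le_bifiltration _ _ (finBasis K _ k.2).2)

theorem LinearIndependent.smul_of_ne_zero {ι R M : Type*} [Semiring R] [IsRightCancelMulZero R]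
    [AddCommMonoid M] [Module R M] {v : ι → M} (hv : LinearIndependent R v) {c : ι → R}
    (hc : ∀ i, c i ≠ 0) : LinearIndependent R fun i => c i • v i := by
  rw [linearIndependent_iff'ₛ] at hv ⊢
  intro s f g hfg i hi
  refine mul_right_cancel₀ (hc i) (hv s (fun i => f i * c i) (fun i => g i * c i) ?_ i hi)
  simpa only [mul_smul] using hfg

theorem MvPolynomial.linearIndependent_monomial_tmul {σ ι K E : Type*} [CommRing K] [IsDomain K]
    [AddCommMonoid E] [Module K E] (e : Basis ι K E) (d : ι → σ →₀ ℕ) :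
    LinearIndependent (MvPolynomial σ K) fun k => monomial (d k) (1 : K) ⊗ₜ[K] e k := by
  have h : (fun k => monomial (d k) (1 : K) ⊗ₜ[K] e k) =
      fun k => monomial (d k) (1 : K) • Algebra.TensorProduct.basis (MvPolynomial σ K) e k :=
    by ext k; exact (Algebra.TensorProduct.basis_repr_symm_apply' e _ k).symm
  rw [h]
  exact (Algebra.TensorProduct.basis _ e).linearIndependent.smul_of_ne_zero
    fun k => by simp

theorem MvPolynomial.monomial_tmul_mem_span_singleton {σ K E : Type*} [CommSemiring K]
    [AddCommMonoid E] [Module K E] {d m : σ →₀ ℕ} (h : d ≤ m) (v : E) :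
    monomial m (1 : K) ⊗ₜ[K] v ∈ (MvPolynomial σ K) ∙ (monomial d (1 : K) ⊗ₜ[K] v) := by
  refine mem_span_singleton.2 ⟨monomial (m - d) 1, ?_⟩
  rw [TensorProduct.smul_tmul', smul_eq_mul, monomial_mul, one_mul, tsub_add_cancel_of_le h]

theorem Module.Basis.IsAdapted.mem {ι K E : Type*} [Semiring K] [AddCommMonoid E] [Module K E]
    {e : Basis ι K E} {a b : ι → ℕ} {F G : ℕ → Submodule K E} (he : e.IsAdapted a b F G) (k : ι) :
    e k ∈ F (a k) ⊓ G (b k) :=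
  he (a k) (b k) ▸ subset_span ⟨k, ⟨le_rfl, le_rfl⟩, rfl⟩

theorem Module.Basis.IsAdapted.reesModule_eq_span {E ι : Type*} [AddCommGroup E] [Module ℂ E]
    {F G : ℕ → Submodule ℂ E} {e : Basis ι ℂ E} {a b : ι → ℕ} (he : e.IsAdapted a b F G) :
    reesModule F G = span (MvPolynomial (Fin 2) ℂ) (Set.range fun k =>
      MvPolynomial.monomial (Finsupp.single 0 (a k) + Finsupp.single 1 (b k)) (1 : ℂ) ⊗ₜ e k) := by
  unfold reesModule
  refine le_antisymm (span_le.2 ?_) (span_le.2 ?_)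
  · rintro _ ⟨i, j, v, hv, rfl⟩
    rw [he] at hv
    induction hv using span_induction with
    | mem x hx =>
      obtain ⟨k, hk, rfl⟩ := hx
      exact span_mono (Set.singleton_subset_iff.2 (Set.mem_range_self k))
        (MvPolynomial.monomial_tmul_mem_span_singleton
          (add_le_add (Finsupp.single_le_single.2 hk.1) (Finsupp.single_le_single.2 hk.2)) (e k))
    | zero => simp
    | add x y _ _ hx hy => rw [TensorProduct.tmul_add]; exact add_mem hx hy
    | smul c x _ hx => rw [TensorProduct.tmul_smul]; exact smul_of_tower_mem _ c hx
  · rintro _ ⟨k, rfl⟩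
    apply subset_span
    exact ⟨a k, b k, e k, he.mem k, rfl⟩

/-- If `E` is a finite-dimensional complex vector space equipped with two
ascending exhaustive filtrations `'F` and `''F`, then the Rees module of the bifiltration
`F_{i,j}E = 'F_i E ∩ ''F_j E` is a free `ℂ[τ₁,τ₂]`-module of rank `dim E`. -/
theorem rees_module_free_of_two_filtrations {E : Type*} [AddCommGroup E] [Module ℂ E]
    [FiniteDimensional ℂ E]
    (F G : ℕ → Submodule ℂ E) (hF : Monotone F) (hG : Monotone G)
    (hFexh : ⨆ i, F i = ⊤) (hGexh : ⨆ j, G j = ⊤) :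
    Nonempty (Module.Basis (Fin (Module.finrank ℂ E)) (MvPolynomial (Fin 2) ℂ) (reesModule F G)) := by
  obtain ⟨ι, e, a, b, he⟩ := exists_basis_isAdapted hF hG hFexh hGexh
  let reesBasis := Basis.span (MvPolynomial.linearIndependent_monomial_tmul e
    fun k => Finsupp.single (0 : Fin 2) (a k) + Finsupp.single 1 (b k))
  exact ⟨(reesBasis.map (LinearEquiv.ofEq _ _ he.reesModule_eq_span.symm)).reindex
    (e.indexEquiv (finBasis ℂ E))⟩
end

section
/- Let g be a complex reductive Lie algebra with invariant form, t a Cartan subalgebra, and G̃ = {(b,x,y) : b Borel, x,y ∈ b}. Identify T*(B × g × t) with its fibers using the form. Then the conormal variety Λ to the image of the embedding ε : g̃ → B × g × t, (b,x) ↦ (b, x, x mod [b,b]), has fiber over the point (b, x, x mod [b,b]) equal to {(−[x,y], y, y mod [b,b]) : y ∈ b} ⊂ [b,b] × g × t. In particular the map (b,x,y) ↦ ((b,[x,y]), (x,y), (ν(b,x), ν(b,y))) is an isomorphism from G̃ onto Λ. -/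
/-- The derived subspace `[b,b]` of a Lie subalgebra `b`, as a submodule of the ambient
Lie algebra. -/
noncomputable def derivedSubmodule {g : Type*} [LieRing g] [LieAlgebra ℂ g]
    (b : LieSubalgebra ℂ g) : Submodule ℂ g :=
  Submodule.span ℂ {z : g | ∃ u ∈ b, ∃ v ∈ b, z = ⁅u, v⁆}

/-!
Moving `x` across the invariant form turns the conormality equation into
`B (n + [x,y]) α + B (y + h) β = 0` for all `α ∈ g`, `β ∈ b`. Taking `β = 0`, nondegeneracy gives
`n = -[x,y]`; taking `α = 0`, `y + h` is orthogonal to `b`, i.e. lies in `b^⊥ = [b,b]`, and then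
`y ∈ b` because `h ∈ t ⊆ b` and `[b,b] ⊆ b`.
-/

lemma derivedSubmodule_le {g : Type*} [LieRing g] [LieAlgebra ℂ g] (b : LieSubalgebra ℂ g) :
    derivedSubmodule b ≤ b.toSubmodule :=
  Submodule.span_le.mpr fun _ ⟨_, hu, _, hv, huv⟩ => huv ▸ b.lie_mem hu hv

section InvariantForm

variable {R M : Type*} [CommRing R] [LieRing M] [LieAlgebra R M] {B : LinearMap.BilinForm R M}

lemma apply_lie_eq_lie_apply (hsymm : ∀ a b : M, B a b = B b a)
    (hinv : ∀ a b c : M, B ⁅a, b⁆ c = B a ⁅b, c⁆) (x y a : M) :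
    B y ⁅a, x⁆ = B ⁅x, y⁆ a := by
  rw [← hinv y a x, hsymm, hinv]

lemma conormal_equation_iff (hsymm : ∀ a b : M, B a b = B b a)
    (hinv : ∀ a b c : M, B ⁅a, b⁆ c = B a ⁅b, c⁆) (p : Submodule R M) (n x y h : M) :
    (∀ α : M, ∀ β ∈ p, B n α + B y (⁅α, x⁆ + β) + B h β = 0) ↔
      (∀ α : M, B (n + ⁅x, y⁆) α = 0) ∧ ∀ β ∈ p, B (y + h) β = 0 := by
  have split : ∀ α β : M,
      B n α + B y (⁅α, x⁆ + β) + B h β = B (n + ⁅x, y⁆) α + B (y + h) β := by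
    intro α β
    simp only [map_add, LinearMap.add_apply, apply_lie_eq_lie_apply hsymm hinv]
    ring
  simp only [split]
  constructor
  · intro H
    exact ⟨fun α => by simpa using H α 0 p.zero_mem, fun β hβ => by simpa using H 0 β hβ⟩
  · rintro ⟨hα, hβ⟩ α β hβp
    rw [hα, hβ β hβp, add_zero]

end InvariantForm

theorem conormal_fiber_of_grothendieck_springer_general
    {g : Type*} [LieRing g] [LieAlgebra ℂ g]
    (B : LinearMap.BilinForm ℂ g)
    (hsymm : ∀ a b : g, B a b = B b a)
    (hnd : B.Nondegenerate)
    (hinv : ∀ a b c : g, B ⁅a, b⁆ c = B a ⁅b, c⁆)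
    (b : LieSubalgebra ℂ g)
    (t : Submodule ℂ g) (htb : t ≤ b.toSubmodule)
    (horth : ∀ z ∈ derivedSubmodule b, ∀ β ∈ b, B z β = 0)
    (hperp : ∀ z : g, (∀ β ∈ b, B z β = 0) → z ∈ derivedSubmodule b)
    (x : g) :
    ∀ (n y h : g), n ∈ derivedSubmodule b → h ∈ t →
      ((∀ α : g, ∀ β ∈ b, B n α + B y (⁅α, x⁆ + β) + B h β = 0) ↔
        (y ∈ b ∧ n = -⁅x, y⁆ ∧ y + h ∈ derivedSubmodule b)) := by
  intro n y h _ ht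
  have hn_iff : (∀ α, B (n + ⁅x, y⁆) α = 0) ↔ n = -⁅x, y⁆ :=
    ⟨fun H => eq_neg_of_add_eq_zero_left (hnd.1 _ H), by
      rintro rfl
      simp only [neg_add_cancel, map_zero, LinearMap.zero_apply, implies_true]⟩
  have hperp_iff : (∀ β ∈ b.toSubmodule, B (y + h) β = 0) ↔ y + h ∈ derivedSubmodule b :=
    ⟨hperp _, horth _⟩
  have hy : y + h ∈ derivedSubmodule b → y ∈ b := fun hyh => by
    simpa using sub_mem (derivedSubmodule_le b hyh) (htb ht)
  refine (conormal_equation_iff hsymm hinv b.toSubmodule n x y h).trans ?_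
  rw [hn_iff, hperp_iff]
  exact ⟨fun ⟨hn, hyh⟩ => ⟨hy hyh, hn, hyh⟩, fun ⟨_, hn, hyh⟩ => ⟨hn, hyh⟩⟩

/-- Let `g` be a complex reductive Lie algebra with invariant form `B`, `b` a
Borel subalgebra with Cartan complement `t` (so `b = t ⊕ [b,b]`, with `[b,b] = b^⊥` relative to
`B`), and `x ∈ b`.  Identify the cotangent space of the flag variety at `b` with `[b,b]` and the
dual of `t` with `t` via `B`.  Then the fiber over `(b, x, x mod [b,b])` of the conormal variety
`Λ` to the image of `ε : g̃ → B × g × t`, i.e. the set of triples `(n, y, h) ∈ [b,b] × g × t`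
satisfying the conormality equation
`⟨α, n⟩ + ⟨[α,x] + β, y⟩ + ⟨β mod [b,b], h⟩ = 0` for all `α ∈ g`, `β ∈ b`,
equals `{(−[x,y], y, y mod [b,b]) : y ∈ b}`.  (Here `h = the t-component of -y`, i.e.
`y + h ∈ [b,b]`; in particular `(b,x,y) ↦ ((b,[x,y]), (x,y), (ν(b,x), ν(b,y)))` identifies `G̃`
with `Λ` fiberwise.) -/
theorem conormal_fiber_of_grothendieck_springer
    {g : Type*} [LieRing g] [LieAlgebra ℂ g]
    (B : LinearMap.BilinForm ℂ g)
    (hsymm : ∀ a b : g, B a b = B b a)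
    (hnd : B.Nondegenerate)
    (hinv : ∀ a b c : g, B ⁅a, b⁆ c = B a ⁅b, c⁆)
    (b : LieSubalgebra ℂ g)
    (hsolv : LieAlgebra.IsSolvable ↥b)
    (hmax : ∀ b' : LieSubalgebra ℂ g, LieAlgebra.IsSolvable ↥b' → b ≤ b' → b' = b)
    (t : Submodule ℂ g) (htb : t ≤ b.toSubmodule)
    (hdirect : b.toSubmodule = t ⊔ derivedSubmodule b ∧ t ⊓ derivedSubmodule b = ⊥)
    (horth : ∀ z ∈ derivedSubmodule b, ∀ β ∈ b, B z β = 0)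
    (hperp : ∀ z : g, (∀ β ∈ b, B z β = 0) → z ∈ derivedSubmodule b)
    (x : g) (hx : x ∈ b) :
    ∀ (n y h : g), n ∈ derivedSubmodule b → h ∈ t →
      ((∀ α : g, ∀ β ∈ b, B n α + B y (⁅α, x⁆ + β) + B h β = 0) ↔
        (y ∈ b ∧ n = -⁅x, y⁆ ∧ y + h ∈ derivedSubmodule b)) :=
  conormal_fiber_of_grothendieck_springer_general B hsymm hnd hinv b t htb horth hperp x
end

section
/- Let V = ℂⁿ and (x,y) a commuting pair of endomorphisms admitting a cyclic vector (a vector v with ℂ⟨x,y⟩·v = V). Then all cyclic vectors for (x,y) form a single orbit under the group of invertible elements of g_{x,y}, and this orbit is the unique Zariski open dense G_{x,y}-orbit in V. -/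
/-- `v` is a cyclic vector for the pair of endomorphisms `(x, y)` of `V = ℂⁿ`:
`ℂ⟨x,y⟩ · v = V`. -/
def IsCyclicVectorPair {n : ℕ} (x y : Module.End ℂ (Fin n → ℂ)) (v : Fin n → ℂ) : Prop :=
  ∀ u : Fin n → ℂ, ∃ a ∈ Algebra.adjoin ℂ ({x, y} : Set (Module.End ℂ (Fin n → ℂ))), a v = u

/-- The orbit of a vector under the group `G_{x,y}` of invertible elements of the joint
centralizer `g_{x,y}`. -/
def centralizerOrbit {n : ℕ} (x y : Module.End ℂ (Fin n → ℂ)) (v : Fin n → ℂ) :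
    Set (Fin n → ℂ) :=
  {w | ∃ a : Module.End ℂ (Fin n → ℂ),
    a ∈ Subalgebra.centralizer ℂ ({x, y} : Set (Module.End ℂ (Fin n → ℂ))) ∧ IsUnit a ∧ a v = w}

/-!
Since `x` and `y` commute, `A = ℂ⟨x,y⟩` is commutative, so for a cyclic vector `v` evaluation at `v`
is injective on the commutant of `A` and identifies `A` with `V`. For `a ∈ A`, the vector `a v` is
cyclic iff `a` is invertible, and units of the commutant preserve cyclicity; hence the cyclic
vectors form the `G_{x,y}`-orbit of `v`. Writing `a_w ∈ A` for the element with `a_w v = w`, they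
are the non-vanishing locus of the polynomial `w ↦ det a_w`, which is nonzero at `v`; so they form
an open dense set by the identity theorem, and any dense orbit meets it.
-/

open Filter Topology

theorem Algebra.centralizer_coe_adjoin {R A : Type*} [CommSemiring R] [Semiring A] [Algebra R A]
    (s : Set A) :
    Subalgebra.centralizer R (Algebra.adjoin R s : Set A) = Subalgebra.centralizer R s :=
  le_antisymm (Subalgebra.centralizer_le R _ _ Algebra.subset_adjoin) fun a ha _ hb =>
    (Algebra.adjoin_le_centralizer_centralizer R s hb a ha).symm

theorem Subalgebra.le_centralizer_self {R A : Type*} [CommSemiring R] [Semiring A] [Algebra R A]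
    (S : Subalgebra R A) [IsMulCommutative S] : S ≤ Subalgebra.centralizer R (S : Set A) :=
  fun _ ha _ hb => setLike_mul_comm hb ha

theorem AnalyticOnNhd.dense_setOf_ne_zero {𝕜 E F : Type*} [NontriviallyNormedField 𝕜]
    [NormedAddCommGroup E] [NormedSpace 𝕜 E] [PreconnectedSpace E]
    [NormedAddCommGroup F] [NormedSpace 𝕜 F] {f : E → F} (hf : AnalyticOnNhd 𝕜 f Set.univ)
    {v : E} (hv : f v ≠ 0) : Dense {w | f w ≠ 0} := by
  refine dense_iff_inter_open.mpr fun U hU ⟨u, hu⟩ => ?_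
  by_contra hempty
  have hzero : f =ᶠ[𝓝 u] 0 :=
    mem_of_superset (hU.mem_nhds hu) fun w hw => not_not.mp fun h => hempty ⟨w, hw, h⟩
  exact hv (hf.eqOn_zero_of_preconnected_of_eventuallyEq_zero isPreconnected_univ
    (Set.mem_univ u) hzero (Set.mem_univ v))

theorem setOf_isUnit_eq_setOf_det_ne_zero {K E W : Type*} [Field K] [AddCommGroup W] [Module K W]
    [FiniteDimensional K W] (f : E → Module.End K W) :
    {w | IsUnit (f w)} = {w | LinearMap.det (f w) ≠ 0} :=
  Set.ext fun w => (LinearMap.isUnit_iff_isUnit_det (f w)).trans isUnit_iff_ne_zero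

section

variable {𝕜 E W : Type*} [NontriviallyNormedField 𝕜] [CompleteSpace 𝕜]
  [NormedAddCommGroup E] [NormedSpace 𝕜 E] [FiniteDimensional 𝕜 E]
  [AddCommGroup W] [Module 𝕜 W] [FiniteDimensional 𝕜 W]

theorem LinearMap.analyticOnNhd_det_apply (L : E →ₗ[𝕜] Module.End 𝕜 W) :
    AnalyticOnNhd 𝕜 (fun w => LinearMap.det (L w)) Set.univ := by
  classical
  let b := Module.finBasis 𝕜 W
  let entries : E →ₗ[𝕜] (Fin (Module.finrank 𝕜 W) × Fin (Module.finrank 𝕜 W) → 𝕜) :=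
    { toFun := fun w p => LinearMap.toMatrix b b (L w) p.1 p.2
      map_add' := fun _ _ => by ext; simp
      map_smul' := fun _ _ => by ext; simp }
  have hdet : (fun w => LinearMap.det (L w)) =
      fun w => MvPolynomial.eval (entries w) (Matrix.det (Matrix.mvPolynomialX _ _ 𝕜)) := by
    ext w
    rw [Matrix.eval_det_mvPolynomialX, ← LinearMap.det_toMatrix b]
    rfl
  rw [hdet]
  exact AnalyticOnNhd.eval_continuousLinearMap (LinearMap.toContinuousLinearMap entries) _

theorem isOpen_setOf_isUnit_apply (L : E →ₗ[𝕜] Module.End 𝕜 W) : IsOpen {w | IsUnit (L w)} := by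
  rw [setOf_isUnit_eq_setOf_det_ne_zero]
  exact isOpen_ne_fun L.analyticOnNhd_det_apply.continuous continuous_const

theorem dense_setOf_isUnit_apply [PreconnectedSpace E] (L : E →ₗ[𝕜] Module.End 𝕜 W) {v : E}
    (hv : IsUnit (L v)) : Dense {w | IsUnit (L w)} := by
  rw [setOf_isUnit_eq_setOf_det_ne_zero]
  exact L.analyticOnNhd_det_apply.dense_setOf_ne_zero
    ((setOf_isUnit_eq_setOf_det_ne_zero L).subset hv)

end

namespace Subalgebra

variable {R M : Type*} [CommRing R] [AddCommGroup M] [Module R M]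
  {A : Subalgebra R (Module.End R M)}

def IsCyclicVector (A : Subalgebra R (Module.End R M)) (v : M) : Prop :=
  ∀ u : M, ∃ a ∈ A, a v = u

theorem isCyclicVector_apply_iff {a : Module.End R M} (ha : a ∈ centralizer R (A : Set _))
    (hunit : IsUnit a) {w : M} : A.IsCyclicVector (a w) ↔ A.IsCyclicVector w := by
  have hcomm : ∀ c ∈ A, ∀ u, c (a u) = a (c u) := fun c hc u =>
    LinearMap.congr_fun (ha c hc) u
  obtain ⟨hinj, hsurj⟩ := (Module.End.isUnit_iff a).mp hunit
  refine ⟨fun haw u => ?_, fun hw u => ?_⟩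
  · obtain ⟨c, hc, hcu⟩ := haw (a u)
    exact ⟨c, hc, hinj (by rw [← hcomm c hc, hcu])⟩
  · obtain ⟨u', rfl⟩ := hsurj u
    obtain ⟨c, hc, rfl⟩ := hw u'
    exact ⟨c, hc, hcomm c hc w⟩

namespace IsCyclicVector

variable {v : M} (hv : A.IsCyclicVector v)
include hv

theorem eq_of_apply_eq {a b : Module.End R M} (ha : a ∈ centralizer R (A : Set _))
    (hb : b ∈ centralizer R (A : Set _)) (hab : a v = b v) : a = b := by
  ext1 u
  obtain ⟨c, hc, rfl⟩ := hv u
  calc a (c v) = c (a v) := (LinearMap.congr_fun (ha c hc) v).symm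
    _ = c (b v) := by rw [hab]
    _ = b (c v) := LinearMap.congr_fun (hb c hc) v

variable [IsMulCommutative A]

theorem isUnit_of_isCyclicVector_apply {a : Module.End R M} (ha : a ∈ A)
    (hav : A.IsCyclicVector (a v)) : IsUnit a := by
  obtain ⟨b, hb, hbav⟩ := hav v
  have hba : b * a = 1 :=
    hv.eq_of_apply_eq (A.le_centralizer_self (mul_mem hb ha))
      (A.le_centralizer_self (one_mem A)) hbav
  exact ⟨⟨a, b, (setLike_mul_comm ha hb).trans hba, hba⟩, rfl⟩

theorem setOf_isCyclicVector_eq :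
    {w | A.IsCyclicVector w} =
      {w | ∃ a ∈ centralizer R (A : Set (Module.End R M)), IsUnit a ∧ a v = w} := by
  ext w
  refine ⟨fun hw => ?_, ?_⟩
  · obtain ⟨a, ha, rfl⟩ := hv w
    exact ⟨a, A.le_centralizer_self ha, hv.isUnit_of_isCyclicVector_apply ha hw, rfl⟩
  · rintro ⟨a, ha, hunit, rfl⟩
    exact (isCyclicVector_apply_iff ha hunit).mpr hv

noncomputable def evalEquiv : A ≃ₗ[R] M :=
  LinearEquiv.ofBijective (LinearMap.applyₗ v ∘ₗ A.val.toLinearMap)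
    ⟨fun a b hab => Subtype.ext <|
      hv.eq_of_apply_eq (A.le_centralizer_self a.2) (A.le_centralizer_self b.2) hab,
    fun u => let ⟨a, ha, hau⟩ := hv u; ⟨⟨a, ha⟩, hau⟩⟩

theorem setOf_isCyclicVector_eq_setOf_isUnit :
    {w | A.IsCyclicVector w} = {w | IsUnit (hv.evalEquiv.symm w : Module.End R M)} := by
  ext w
  obtain ⟨a, rfl⟩ := hv.evalEquiv.surjective w
  simp only [Set.mem_ofPred_eq, LinearEquiv.symm_apply_apply]
  exact ⟨hv.isUnit_of_isCyclicVector_apply a.2,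
    fun hunit => (isCyclicVector_apply_iff (A.le_centralizer_self a.2) hunit).mpr hv⟩

end IsCyclicVector

end Subalgebra

namespace Subalgebra.IsCyclicVector

variable {𝕜 M : Type*} [NontriviallyNormedField 𝕜] [CompleteSpace 𝕜]
  [NormedAddCommGroup M] [NormedSpace 𝕜 M] [FiniteDimensional 𝕜 M]
  {A : Subalgebra 𝕜 (Module.End 𝕜 M)} [IsMulCommutative A] {v : M}

theorem isOpen_setOf_isCyclicVector (hv : A.IsCyclicVector v) :
    IsOpen {w | A.IsCyclicVector w} := by
  rw [hv.setOf_isCyclicVector_eq_setOf_isUnit]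
  exact isOpen_setOf_isUnit_apply (A.val.toLinearMap ∘ₗ hv.evalEquiv.symm.toLinearMap)

theorem dense_setOf_isCyclicVector [PreconnectedSpace M] (hv : A.IsCyclicVector v) :
    Dense {w | A.IsCyclicVector w} := by
  rw [hv.setOf_isCyclicVector_eq_setOf_isUnit]
  exact dense_setOf_isUnit_apply (A.val.toLinearMap ∘ₗ hv.evalEquiv.symm.toLinearMap)
    (hv.setOf_isCyclicVector_eq_setOf_isUnit.subset hv)

end Subalgebra.IsCyclicVector

/-- Let `V = ℂⁿ` and `(x, y)` a commuting pair of endomorphisms admitting a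
cyclic vector `v`.  Then all cyclic vectors for `(x, y)` form a single orbit under the group
`G_{x,y}` of invertible elements of the centralizer `g_{x,y}`, and this orbit is the unique
open dense `G_{x,y}`-orbit in `V`. -/
theorem cyclic_vectors_form_unique_open_dense_orbit {n : ℕ}
    (x y : Module.End ℂ (Fin n → ℂ)) (hxy : Commute x y)
    (v : Fin n → ℂ) (hv : IsCyclicVectorPair x y v) :
    {w | IsCyclicVectorPair x y w} = centralizerOrbit x y v ∧
    IsOpen {w | IsCyclicVectorPair x y w} ∧
    Dense {w | IsCyclicVectorPair x y w} ∧
    ∀ v' : Fin n → ℂ, IsOpen (centralizerOrbit x y v') → Dense (centralizerOrbit x y v') →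
      centralizerOrbit x y v' = centralizerOrbit x y v := by
  set A := Algebra.adjoin ℂ ({x, y} : Set (Module.End ℂ (Fin n → ℂ)))
  have : IsMulCommutative A := Algebra.isMulCommutative_adjoin ℂ <| by
    rintro a (rfl | rfl) b (rfl | rfl)
    exacts [rfl, hxy.eq, hxy.eq.symm, rfl]
  have hv : A.IsCyclicVector v := hv
  have horbit : ∀ u, A.IsCyclicVector u →
      {w | IsCyclicVectorPair x y w} = centralizerOrbit x y u := fun u hu => by
    rw [centralizerOrbit, ← Algebra.centralizer_coe_adjoin]
    exact hu.setOf_isCyclicVector_eq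
  refine ⟨horbit v hv, hv.isOpen_setOf_isCyclicVector, hv.dense_setOf_isCyclicVector,
    fun v' _ hdense => ?_⟩
  obtain ⟨_, hav', a, ha, hunit, rfl⟩ :=
    hdense.inter_open_nonempty _ hv.isOpen_setOf_isCyclicVector ⟨v, hv⟩
  rw [← Algebra.centralizer_coe_adjoin] at ha
  rw [← horbit v hv, ← horbit v' ((Subalgebra.isCyclicVector_apply_iff ha hunit).mp hav')]
end
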